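/- arXiv:1109.0313 — 2 statements merged into one kernel-verified Lean document; each statement's English description precedes it below -/
import Mathlib

section
/- Let G be a finitely generated group, X a bounded Banach G-module, and ℰ ⊆ ℓ∞(G, X*) a weak-* closed Hopf G-module. Then for every n ≥ 1 and every bounded function α : G^{n+1} → ℰ satisfying α(g g₀, …, g g_n) = g * α(g₀, …, g_n) for all g, g₀, …, g_n ∈ G and the cocycle identity ∑_{i=0}^{n+1} (−1)^i α(g₀, …, ĝ_i, …, g_{n+1}) = 0 for all g₀, …, g_{n+1} ∈ G (where ĝ_i means the i-th entry is omitted), there exists a bounded function β : G^n → ℰ with β(g g₀, …, g g_{n−1}) = g * β(g₀, …, g_{n−1}) for all g, g₀, …, g_{n−1} ∈ G and ∑_{i=0}^{n} (−1)^i β(g₀, …, ĝ_i, …, g_n) = α(g₀, …, g_n) for all g₀, …, g_n ∈ G. (Equivalently, the bounded cohomology H^n_b(G, ℰ) computed from the homogeneous resolution of bounded equivariant cochains vanishes for all n ≥ 1.) -/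
open scoped ENNReal
set_option linter.unusedSectionVars false

noncomputable section

variable {G : Type*} [Group G]
variable {X : Type*} [NormedAddCommGroup X] [NormedSpace ℝ X]

/-- Build an element of `ℓ∞(G, Z)` from a uniformly bounded function. -/
def linfElem {Z : Type*} [NormedAddCommGroup Z] (f : G → Z) (C : ℝ) (h : ∀ g, ‖f g‖ ≤ C) :
    lp (fun _ : G => Z) ∞ :=
  ⟨f, memℓp_infty ⟨C, by rintro r ⟨g, rfl⟩; exact h g⟩⟩

@[simp] lemma linfElem_apply {Z : Type*} [NormedAddCommGroup Z] (f : G → Z) (C : ℝ)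
    (h : ∀ g, ‖f g‖ ≤ C) (g : G) : linfElem f C h g = f g := rfl

/-- The action `•` of `ℓ∞(G)` on `ℓ∞(G, Z)`: `(a • f)_g = a_g f_g`. -/
def bullet {Z : Type*} [NormedAddCommGroup Z] [NormedSpace ℝ Z]
    (a : lp (fun _ : G => ℝ) ∞) (f : lp (fun _ : G => Z) ∞) :
    lp (fun _ : G => Z) ∞ :=
  linfElem (fun g => a g • f g) (‖a‖ * ‖f‖) (by
    intro g
    rw [norm_smul]
    exact mul_le_mul (lp.norm_apply_le_norm ENNReal.top_ne_zero a g)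
      (lp.norm_apply_le_norm ENNReal.top_ne_zero f g) (norm_nonneg _) (norm_nonneg _))

/-- The action of `G` on `ℓ∞(G, X*)` given by `(g * f)_h = g (f_{g⁻¹h})`, where `G` acts
on `X*` by the dual action `(gφ)(x) = φ(g⁻¹ x)` of a representation `ρ` of `G` on `X`. -/
def starA (ρ : G →* X →L[ℝ] X) (g : G) (φ : lp (fun _ : G => X →L[ℝ] ℝ) ∞) :
    lp (fun _ : G => X →L[ℝ] ℝ) ∞ :=
  linfElem (fun h => (φ (g⁻¹ * h)).comp (ρ g⁻¹)) (‖ρ g⁻¹‖ * ‖φ‖) (by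
    intro h
    calc ‖(φ (g⁻¹ * h)).comp (ρ g⁻¹)‖ ≤ ‖φ (g⁻¹ * h)‖ * ‖ρ g⁻¹‖ :=
          ContinuousLinearMap.opNorm_comp_le _ _
      _ ≤ ‖ρ g⁻¹‖ * ‖φ‖ := by
          rw [mul_comm]
          gcongr
          exact lp.norm_apply_le_norm ENNReal.top_ne_zero φ _)

/-- The weak-* topology on `ℓ∞(G, X*)` as the dual of `ℓ₁(G, X)`: the coarsest topology
making `φ ↦ ∑_g φ_g(η_g)` continuous for every `η ∈ ℓ₁(G, X)`. -/
def wstar (G : Type*) (X : Type*) [NormedAddCommGroup X] [NormedSpace ℝ X] :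
    TopologicalSpace (lp (fun _ : G => X →L[ℝ] ℝ) ∞) :=
  ⨅ η : lp (fun _ : G => X) 1,
    TopologicalSpace.induced
      (fun φ : lp (fun _ : G => X →L[ℝ] ℝ) ∞ => ∑' g : G, φ g (η g)) inferInstance

end

noncomputable section Aux

variable {G : Type*} [Group G]
variable {X : Type*} [NormedAddCommGroup X] [NormedSpace ℝ X]

open scoped Classical

/-- Indicator function of a point, as an element of `ℓ∞(G)`. -/
def indic (h : G) : lp (fun _ : G => ℝ) ∞ :=
  linfElem (fun g => if g = h then (1 : ℝ) else 0) 1 (by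
    intro g; by_cases hg : g = h <;> simp [hg])

lemma lp_sum_apply {ι : Type*} (s : Finset ι) (f : ι → lp (fun _ : G => X →L[ℝ] ℝ) ∞)
    (h : G) : (∑ i ∈ s, f i) h = ∑ i ∈ s, f i h := by
  classical
  induction s using Finset.induction_on with
  | empty => simp only [Finset.sum_empty]; exact congrFun (lp.coeFn_zero _ _) h
  | insert _ _ hx ih =>
      rw [Finset.sum_insert hx, Finset.sum_insert hx, ← ih]
      exact congrFun (lp.coeFn_add _ _) h

lemma lp_smul_apply (c : ℝ) (f : lp (fun _ : G => X →L[ℝ] ℝ) ∞) (h : G) :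
    (c • f) h = c • f h :=
  congrFun (lp.coeFn_smul c f) h

/-- Summability of the pairing between `ℓ∞(G, X*)` and `ℓ₁(G, X)`. -/
lemma pairing_summable (φ : lp (fun _ : G => X →L[ℝ] ℝ) ∞) (η : lp (fun _ : G => X) 1) :
    Summable fun g : G => φ g (η g) := by
  have hη : Summable fun g : G => ‖η g‖ := by
    have := (lp.memℓp η).summable (by norm_num : 0 < (1 : ℝ≥0∞).toReal)
    simpa using this
  refine Summable.of_norm_bounded (hη.mul_left ‖φ‖) ?_
  intro g
  calc ‖φ g (η g)‖ ≤ ‖φ g‖ * ‖η g‖ := (φ g).le_opNorm _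
    _ ≤ ‖φ‖ * ‖η g‖ := by
        gcongr; exact lp.norm_apply_le_norm ENNReal.top_ne_zero φ g

end Aux

set_option maxHeartbeats 1000000 in
set_option synthInstance.maxHeartbeats 200000 in
/-- **Vanishing of bounded cohomology with coefficients in weak-* closed Hopf
`G`-modules.**  Let `G` be a finitely generated group, `X` a bounded Banach `G`-module
and `ℰ ⊆ ℓ∞(G, X*)` a weak-* closed Hopf `G`-module.  Then `H^n_b(G, ℰ) = 0` for all
`n ≥ 1`, computed from the homogeneous resolution: every bounded `G`-equivariant
`α : G^{n+1} → ℰ` with `∑_{i=0}^{n+1} (−1)^i α(g₀, …, ĝᵢ, …, g_{n+1}) = 0` is the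
coboundary of a bounded `G`-equivariant `β : G^n → ℰ`, i.e.
`∑_{i=0}^{n} (−1)^i β(g₀, …, ĝᵢ, …, g_n) = α(g₀, …, g_n)`. -/
theorem bounded_cohomology_vanishes_hopf
    {G : Type*} [Group G] [Group.FG G]
    {X : Type*} [NormedAddCommGroup X] [NormedSpace ℝ X] [CompleteSpace X]
    (ρ : G →* X →L[ℝ] X) (C : ℝ) (hρ : ∀ g : G, ‖ρ g‖ ≤ C)
    (ℰ : Submodule ℝ (lp (fun _ : G => X →L[ℝ] ℝ) ∞))
    (hstar : ∀ (g : G), ∀ φ ∈ ℰ, starA ρ g φ ∈ ℰ)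
    (hbullet : ∀ (a : lp (fun _ : G => ℝ) ∞), ∀ φ ∈ ℰ, bullet a φ ∈ ℰ)
    (hclosed : @IsClosed _ (wstar G X) (ℰ : Set (lp (fun _ : G => X →L[ℝ] ℝ) ∞)))
    (n : ℕ) (hn : 1 ≤ n)
    (α : (Fin (n + 1) → G) → lp (fun _ : G => X →L[ℝ] ℝ) ∞)
    (hα_mem : ∀ t, α t ∈ ℰ)
    (hα_bdd : ∃ Cα : ℝ, ∀ t, ‖α t‖ ≤ Cα)
    (hα_equiv : ∀ (g : G) (t : Fin (n + 1) → G), α (fun i => g * t i) = starA ρ g (α t))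
    (hα_cocycle : ∀ t : Fin (n + 2) → G,
      ∑ i : Fin (n + 2), ((-1 : ℝ) ^ (i : ℕ)) • α (fun j => t (i.succAbove j)) = 0) :
    ∃ β : (Fin n → G) → lp (fun _ : G => X →L[ℝ] ℝ) ∞,
      (∀ t, β t ∈ ℰ) ∧
      (∃ Cβ : ℝ, ∀ t, ‖β t‖ ≤ Cβ) ∧
      (∀ (g : G) (t : Fin n → G), β (fun i => g * t i) = starA ρ g (β t)) ∧
      (∀ t : Fin (n + 1) → G,
        ∑ i : Fin (n + 1), ((-1 : ℝ) ^ (i : ℕ)) • β (fun j => t (i.succAbove j)) = α t) := by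
  classical
  obtain ⟨Cα, hCα⟩ := hα_bdd
  -- the contracting homotopy: `β t` is the "diagonal" `h ↦ α(h, t)(h)`
  set β : (Fin n → G) → lp (fun _ : G => X →L[ℝ] ℝ) ∞ :=
    fun t => linfElem (fun h => α (Fin.cons h t) h) Cα
      (fun h => (lp.norm_apply_le_norm ENNReal.top_ne_zero _ h).trans (hCα _)) with hβ
  have hβ_apply : ∀ (t : Fin n → G) (h : G), β t h = α (Fin.cons h t) h := fun _ _ => rfl
  refine ⟨β, ?_, ?_, ?_, ?_⟩
  · -- membership in ℰ, via weak-* approximation by finitely supported truncations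
    intro t
    set S : Finset G → lp (fun _ : G => X →L[ℝ] ℝ) ∞ :=
      fun F => ∑ h ∈ F, bullet (indic h) (α (Fin.cons h t)) with hS
    have hS_mem : ∀ F, S F ∈ ℰ := fun F =>
      Submodule.sum_mem ℰ fun h _ => hbullet _ _ (hα_mem _)
    have hS_apply : ∀ (F : Finset G) (g : G),
        S F g = if g ∈ F then β t g else 0 := by
      intro F g
      rw [hS, lp_sum_apply]
      have : ∀ h ∈ F, (bullet (indic h) (α (Fin.cons h t))) g
          = if h = g then β t g else 0 := by
        intro h _
        show (indic h g : ℝ) • α (Fin.cons h t) g = _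
        by_cases hg : h = g
        · subst hg; simp [indic, hβ_apply]
        · have : (indic h g : ℝ) = 0 := by
            simp [indic, Ne.symm hg, (fun hgh => hg hgh.symm : ¬ g = h)]
          simp [this, hg]
      rw [Finset.sum_congr rfl this, Finset.sum_ite_eq']
    have key : Filter.Tendsto S Filter.atTop (@nhds _ (wstar G X) (β t)) := by
      rw [wstar, nhds_iInf]
      rw [Filter.tendsto_iInf]
      intro η
      rw [nhds_induced, Filter.tendsto_comap_iff]
      have hsum : Summable fun g : G => β t g (η g) := pairing_summable _ _
      have : (fun F => ∑' g : G, S F g (η g))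
          = fun F : Finset G => ∑ g ∈ F, β t g (η g) := by
        funext F
        rw [tsum_eq_sum (s := F)]
        · exact Finset.sum_congr rfl fun g hg => by rw [hS_apply, if_pos hg]
        · intro g hg
          rw [hS_apply, if_neg hg]
          simp
      show Filter.Tendsto (fun F => ∑' g : G, S F g (η g)) Filter.atTop _
      rw [this]
      exact hsum.hasSum
    exact @IsClosed.mem_of_tendsto _ (wstar G X) _ (β t)
      (ℰ : Set (lp (fun _ : G => X →L[ℝ] ℝ) ∞)) S Filter.atTop
      Filter.atTop_neBot hclosed key (Filter.Eventually.of_forall hS_mem)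
  · -- boundedness
    refine ⟨Cα, fun t => ?_⟩
    have h0 : (0 : ℝ) ≤ Cα := le_trans (norm_nonneg _) (hCα (fun _ => 1))
    refine lp.norm_le_of_forall_le h0 fun h => ?_
    rw [hβ_apply]
    exact (lp.norm_apply_le_norm ENNReal.top_ne_zero _ h).trans (hCα _)
  · -- equivariance
    intro g t
    apply lp.ext
    funext h
    have h1 : (Fin.cons h (fun i => g * t i) : Fin (n + 1) → G)
        = fun i => g * (Fin.cons (g⁻¹ * h) t : Fin (n + 1) → G) i := by
      funext i
      induction i using Fin.cases with
      | zero => simp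
      | succ j => simp
    show β (fun i => g * t i) h = (starA ρ g (β t)) h
    rw [hβ_apply, h1, hα_equiv]
    show (α (Fin.cons (g⁻¹ * h) t) (g⁻¹ * h)).comp (ρ g⁻¹)
      = ((β t) (g⁻¹ * h)).comp (ρ g⁻¹)
    rw [hβ_apply]
  · -- coboundary identity
    intro t
    have hco := hα_cocycle
    apply lp.ext
    funext h
    -- the cocycle identity at `Fin.cons h t`
    have key : ∑ i : Fin (n + 1),
        ((-1 : ℝ) ^ (i : ℕ)) • α (Fin.cons h (fun j => t (i.succAbove j))) = α t := by
      have := hα_cocycle (Fin.cons h t)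
      rw [Fin.sum_univ_succ] at this
      have h0 : (fun j => (Fin.cons h t : Fin (n + 2) → G) ((0 : Fin (n + 2)).succAbove j))
          = t := by
        funext j; simp
      have hsucc : ∀ (i : Fin (n + 1)),
          (fun j => (Fin.cons h t : Fin (n + 2) → G) (i.succ.succAbove j))
          = (Fin.cons h (fun j => t (i.succAbove j)) : Fin (n + 1) → G) := by
        intro i
        funext j
        refine Fin.cases ?_ (fun k => ?_) j
        · rw [Fin.succ_succAbove_zero]; simp
        · rw [Fin.succ_succAbove_succ]; simp
      have e0 : ((-1 : ℝ) ^ (((0 : Fin (n + 2))) : ℕ))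
          • α (fun j => (Fin.cons h t : Fin (n + 2) → G) ((0 : Fin (n + 2)).succAbove j))
          = α t := by
        rw [h0]; norm_num
      have hstep : ∀ i : Fin (n + 1),
          ((-1 : ℝ) ^ ((i.succ : Fin (n + 2)) : ℕ))
            • α (fun j => (Fin.cons h t : Fin (n + 2) → G) (i.succ.succAbove j))
          = -(((-1 : ℝ) ^ (i : ℕ)) • α (Fin.cons h (fun j => t (i.succAbove j)))) := by
        intro i
        rw [hsucc i, Fin.val_succ, pow_succ, mul_comm, neg_one_mul, neg_smul]
      rw [e0, Finset.sum_congr rfl (fun i _ => hstep i), Finset.sum_neg_distrib,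
        add_neg_eq_zero] at this
      exact this.symm
    calc (∑ i : Fin (n + 1), ((-1 : ℝ) ^ (i : ℕ)) • β (fun j => t (i.succAbove j))) h
        = ∑ i : Fin (n + 1), (((-1 : ℝ) ^ (i : ℕ)) • β (fun j => t (i.succAbove j))) h := by
          rw [lp_sum_apply]
      _ = ∑ i : Fin (n + 1),
            ((-1 : ℝ) ^ (i : ℕ)) • α (Fin.cons h (fun j => t (i.succAbove j))) h := by
          refine Finset.sum_congr rfl fun i _ => ?_
          rw [lp_smul_apply, hβ_apply]
      _ = (∑ i : Fin (n + 1),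
            ((-1 : ℝ) ^ (i : ℕ)) • α (Fin.cons h (fun j => t (i.succAbove j)))) h := by
          rw [lp_sum_apply]
          exact Finset.sum_congr rfl fun i _ => (lp_smul_apply _ _ _).symm
      _ = α t h := by rw [key]
end

section
/- Let G be a finitely generated group, X a real Banach space, and V ⊆ X* a weak-* dense linear subspace. Let K ⊆ ℓ∞(G, X) be a nonempty, bounded, ℓ∞(G)-convex subset that is compact in the ultra-weak topology induced by V. Let α be a G-affine action of G on K such that each map α_g : K → K is continuous for the ultra-weak topology. Then there exists a point x₀ ∈ K with α_g(x₀) = x₀ for all g ∈ G. -/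
open scoped ENNReal
set_option linter.unusedSectionVars false

noncomputable section

variable {G : Type*} [Group G]
variable {X : Type*} [NormedAddCommGroup X] [NormedSpace ℝ X]

/-- The translation action of `G` on `ℓ∞(G)`: `(g * a)_h = a_{g⁻¹ h}`. -/
def gstar (g : G) (a : lp (fun _ : G => ℝ) ∞) : lp (fun _ : G => ℝ) ∞ :=
  linfElem (fun h => a (g⁻¹ * h)) ‖a‖
    (fun h => lp.norm_apply_le_norm ENNReal.top_ne_zero a _)

/-- A set `K ⊆ ℓ∞(G, X)` is `ℓ∞(G)`-convex if it is stable under combinations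
`∑ aᵢ • xᵢ` with `aᵢ ∈ ℓ∞(G)` nonnegative, `∑ aᵢ = 1_G` and `xᵢ ∈ K`. -/
def LinfConvex (K : Set (lp (fun _ : G => X) ∞)) : Prop :=
  ∀ (n : ℕ) (a : Fin n → lp (fun _ : G => ℝ) ∞) (x : Fin n → lp (fun _ : G => X) ∞),
    (∀ (i : Fin n) (h : G), 0 ≤ a i h) → (∀ h : G, ∑ i, a i h = 1) →
    (∀ i, x i ∈ K) → (∑ i, bullet (a i) (x i)) ∈ K

/-- A family of maps `α_g : K → K` is a `G`-affine action if `α_e = id`,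
`α_{gh} = α_g ∘ α_h`, and `α_g (a • x + b • y) = (g * a) • α_g x + (g * b) • α_g y`
for all nonnegative `a, b ∈ ℓ∞(G)` with `a + b = 1_G`. -/
def IsGAffineAction (K : Set (lp (fun _ : G => X) ∞)) (α : G → K → K) : Prop :=
  (∀ x : K, α 1 x = x) ∧
  (∀ (g h : G) (x : K), α (g * h) x = α g (α h x)) ∧
  (∀ (g : G) (a b : lp (fun _ : G => ℝ) ∞),
    (∀ h : G, 0 ≤ a h) → (∀ h : G, 0 ≤ b h) → (∀ h : G, a h + b h = 1) →
    ∀ x y z : K, (z : lp (fun _ : G => X) ∞) = bullet a ↑x + bullet b ↑y →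
      (α g z : lp (fun _ : G => X) ∞) =
        bullet (gstar g a) ↑(α g x) + bullet (gstar g b) ↑(α g y))

/-- A map `T : K → ℓ∞(G)` is `ℓ∞(G)`-convex if `T (a • x + b • y) = a • T x + b • T y`
for all nonnegative `a, b ∈ ℓ∞(G)` with `a + b = 1_G`. -/
def IsLinfConvexMap (K : Set (lp (fun _ : G => X) ∞)) (T : K → lp (fun _ : G => ℝ) ∞) :
    Prop :=
  ∀ (a b : lp (fun _ : G => ℝ) ∞),
    (∀ h : G, 0 ≤ a h) → (∀ h : G, 0 ≤ b h) → (∀ h : G, a h + b h = 1) →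
    ∀ x y z : K, (z : lp (fun _ : G => X) ∞) = bullet a ↑x + bullet b ↑y →
      T z = bullet a (T x) + bullet b (T y)

/-- The action of `G` on maps `T : K → ℓ∞(G)`: `(g · T)(x) = g * (T (α_{g⁻¹} x))`. -/
def dotT (K : Set (lp (fun _ : G => X) ∞)) (α : G → K → K) (g : G)
    (T : K → lp (fun _ : G => ℝ) ∞) : K → lp (fun _ : G => ℝ) ∞ :=
  fun x => gstar g (T (α g⁻¹ x))

end

section topologies

variable (G : Type*) [Group G]
variable (X : Type*) [NormedAddCommGroup X] [NormedSpace ℝ X]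

/-- The weak-* topology on `ℓ∞(G)` as the dual of `ℓ₁(G)`: the coarsest topology making
`b ↦ ∑_g a_g b_g` continuous for every `a ∈ ℓ₁(G)`. -/
noncomputable def wstarLinf : TopologicalSpace (lp (fun _ : G => ℝ) ∞) :=
  ⨅ a : lp (fun _ : G => ℝ) 1,
    TopologicalSpace.induced (fun b : lp (fun _ : G => ℝ) ∞ => ∑' g : G, a g * b g)
      inferInstance

/-- The ultra-weak topology on `ℓ∞(G, X)` induced by a subspace `V ⊆ X*`: the coarsest
topology making each `T_φ : ℓ∞(G, X) → ℓ∞(G)`, `(T_φ f)(g) = φ(f_g)`, continuous for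
`φ ∈ V`, with `ℓ∞(G)` carrying its weak-* topology as the dual of `ℓ₁(G)`; equivalently,
the coarsest topology making `f ↦ ∑_g a_g φ(f_g)` continuous for all `φ ∈ V`,
`a ∈ ℓ₁(G)`. -/
noncomputable def ultraweak (V : Submodule ℝ (X →L[ℝ] ℝ)) :
    TopologicalSpace (lp (fun _ : G => X) ∞) :=
  ⨅ (φ : V) (a : lp (fun _ : G => ℝ) 1),
    TopologicalSpace.induced
      (fun f : lp (fun _ : G => X) ∞ => ∑' g : G, a g * (φ : X →L[ℝ] ℝ) (f g))
      inferInstance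

end topologies

/-!
Fix `b ∈ K` and let `x₀` be the diagonal of the orbit: `x₀(h) = (α_h b)(h)`. Gluing finitely
many coordinates of orbit points onto `b` with indicator functions stays inside `K` by
`ℓ∞(G)`-convexity, and these gluings converge ultra-weakly to `x₀` (they are uniformly bounded
and agree with `x₀` on larger and larger finite sets); the ultra-weak topology is Hausdorff
because `V` is weak-* dense, so the compact set `K` is closed and `x₀ ∈ K`. Finally
`G`-affineness says that `(α_g x)(h)` only depends on `x(g⁻¹h)`; as `x₀` agrees with
`α_{g⁻¹h} b` at `g⁻¹h`, we get `(α_g x₀)(h) = (α_h b)(h) = x₀(h)`.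
-/

open Filter Topology Pointwise

noncomputable section

section Piecewise

variable {G : Type*} [Group G] {Z : Type*} [NormedAddCommGroup Z]

open Classical in
def linfPiecewise (S : Set G) (x y : lp (fun _ : G => Z) ∞) : lp (fun _ : G => Z) ∞ :=
  linfElem (S.piecewise x y) (max ‖x‖ ‖y‖) fun g => by
    by_cases hg : g ∈ S
    · simpa [hg] using le_max_of_le_left (lp.norm_apply_le_norm ENNReal.top_ne_zero x g)
    · simpa [hg] using le_max_of_le_right (lp.norm_apply_le_norm ENNReal.top_ne_zero y g)

variable {S : Set G} {x y : lp (fun _ : G => Z) ∞} {g : G}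

@[simp] lemma linfPiecewise_apply_of_mem (hg : g ∈ S) : linfPiecewise S x y g = x g := by
  classical
  simp [linfPiecewise, hg]

@[simp] lemma linfPiecewise_apply_of_notMem (hg : g ∉ S) : linfPiecewise S x y g = y g := by
  classical
  simp [linfPiecewise, hg]

@[simp] lemma linfPiecewise_empty : linfPiecewise ∅ x y = y := by
  ext g
  exact linfPiecewise_apply_of_notMem (Set.notMem_empty g)

def linfIndicator (S : Set G) : lp (fun _ : G => ℝ) ∞ := linfPiecewise S 1 0

lemma linfIndicator_nonneg (S : Set G) (g : G) : 0 ≤ linfIndicator S g := by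
  by_cases hg : g ∈ S <;> simp [linfIndicator, hg, lp.infty_coeFn_one]

lemma linfIndicator_add_compl (S : Set G) (g : G) :
    linfIndicator S g + linfIndicator Sᶜ g = 1 := by
  by_cases hg : g ∈ S <;> simp [linfIndicator, hg, lp.infty_coeFn_one]

lemma gstar_linfIndicator (g : G) (S : Set G) :
    gstar g (linfIndicator S) = linfIndicator (g • S) := by
  ext h
  have hmem : h ∈ g • S ↔ g⁻¹ * h ∈ S := Set.mem_smul_set_iff_inv_smul_mem
  by_cases hh : g⁻¹ * h ∈ S
  · simp [gstar, linfIndicator, hh, hmem.mpr hh, lp.infty_coeFn_one]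
  · simp [gstar, linfIndicator, hh, mt hmem.mp hh]

lemma linfPiecewise_eq_bullet {Z : Type*} [NormedAddCommGroup Z] [NormedSpace ℝ Z]
    (S : Set G) (x y : lp (fun _ : G => Z) ∞) :
    linfPiecewise S x y = bullet (linfIndicator S) x + bullet (linfIndicator Sᶜ) y := by
  ext g
  by_cases hg : g ∈ S <;> simp [bullet, linfIndicator, hg, lp.infty_coeFn_one]

def linfDiag (y : G → lp (fun _ : G => Z) ∞) (C : ℝ) (hy : ∀ g, ‖y g‖ ≤ C) :
    lp (fun _ : G => Z) ∞ :=
  linfElem (fun g => y g g) C fun g =>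
    (lp.norm_apply_le_norm ENNReal.top_ne_zero _ g).trans (hy g)

@[simp] lemma linfDiag_apply (y : G → lp (fun _ : G => Z) ∞) (C : ℝ)
    (hy : ∀ g, ‖y g‖ ≤ C) (g : G) : linfDiag y C hy g = y g g := rfl

lemma linfPiecewise_singleton_linfDiag (y : G → lp (fun _ : G => Z) ∞) (C : ℝ)
    (hy : ∀ g, ‖y g‖ ≤ C) (k : G) :
    linfPiecewise {k} (y k) (linfDiag y C hy) = linfDiag y C hy := by
  ext g
  by_cases hg : g = k
  · subst hg; simp
  · simp [hg]

lemma linfPiecewise_insert_linfDiag (y : G → lp (fun _ : G => Z) ∞) (C : ℝ)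
    (hy : ∀ g, ‖y g‖ ≤ C) (k : G) (S : Set G) (z : lp (fun _ : G => Z) ∞) :
    linfPiecewise (insert k S) (linfDiag y C hy) z =
      linfPiecewise {k} (y k) (linfPiecewise S (linfDiag y C hy) z) := by
  ext g
  by_cases hk : g = k
  · subst hk; simp
  · by_cases hS : g ∈ S <;> simp [hk, hS]

end Piecewise

section Convexity

variable {G : Type*} [Group G] {X : Type*} [NormedAddCommGroup X] [NormedSpace ℝ X]
  {K : Set (lp (fun _ : G => X) ∞)}

lemma LinfConvex.bullet_add_bullet_mem (hK : LinfConvex K) {a b : lp (fun _ : G => ℝ) ∞}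
    (ha : ∀ g, 0 ≤ a g) (hb : ∀ g, 0 ≤ b g) (hab : ∀ g, a g + b g = 1)
    {x y : lp (fun _ : G => X) ∞} (hx : x ∈ K) (hy : y ∈ K) :
    bullet a x + bullet b y ∈ K := by
  simpa [Fin.sum_univ_two] using hK 2 ![a, b] ![x, y]
    (fun i g => by fin_cases i <;> simp [ha g, hb g]) (by simpa [Fin.sum_univ_two] using hab)
    (fun i => by fin_cases i <;> simpa)

lemma LinfConvex.linfPiecewise_mem (hK : LinfConvex K) (S : Set G)
    {x y : lp (fun _ : G => X) ∞} (hx : x ∈ K) (hy : y ∈ K) : linfPiecewise S x y ∈ K := by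
  rw [linfPiecewise_eq_bullet]
  exact hK.bullet_add_bullet_mem (linfIndicator_nonneg S) (linfIndicator_nonneg Sᶜ)
    (linfIndicator_add_compl S) hx hy

lemma IsGAffineAction.coe_apply_linfPiecewise {α : G → K → K} (hα : IsGAffineAction K α)
    (g : G) (S : Set G) {x y z : K} (hz : (z : lp (fun _ : G => X) ∞) = linfPiecewise S x y) :
    (α g z : lp (fun _ : G => X) ∞) = linfPiecewise (g • S) (α g x) (α g y) := by
  rw [linfPiecewise_eq_bullet] at hz ⊢
  rw [← Set.smul_set_compl, ← gstar_linfIndicator, ← gstar_linfIndicator]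
  exact hα.2.2 g _ _ (linfIndicator_nonneg S) (linfIndicator_nonneg Sᶜ)
    (linfIndicator_add_compl S) x y z hz

end Convexity

section Ultraweak

variable {G : Type*} {X : Type*} [NormedAddCommGroup X] [NormedSpace ℝ X]

lemma summable_norm_lp_one (a : lp (fun _ : G => ℝ) 1) : Summable fun g => ‖a g‖ := by
  simpa using (lp.memℓp a).summable (by norm_num : (0 : ℝ) < (1 : ℝ≥0∞).toReal)

lemma summable_mul_apply (a : lp (fun _ : G => ℝ) 1) (φ : X →L[ℝ] ℝ)
    (f : lp (fun _ : G => X) ∞) : Summable fun g => a g * φ (f g) := by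
  refine .of_norm_bounded ((summable_norm_lp_one a).mul_right (‖φ‖ * ‖f‖)) fun g => ?_
  rw [norm_mul]
  gcongr
  exact φ.le_opNorm_of_le (lp.norm_apply_le_norm ENNReal.top_ne_zero f g)

lemma norm_tsum_mul_apply_le (a : lp (fun _ : G => ℝ) 1) (φ : X →L[ℝ] ℝ)
    {f : lp (fun _ : G => X) ∞} {F : Finset G} (hf : ∀ g ∈ F, f g = 0) {C : ℝ}
    (hC : ‖f‖ ≤ C) :
    ‖∑' g, a g * φ (f g)‖ ≤ ∑' g : {g // g ∉ F}, ‖a g‖ * (‖φ‖ * C) := by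
  rw [← tsum_subtype_eq_of_support_subset (s := {g | g ∉ F})]
  · refine tsum_of_norm_bounded (((summable_norm_lp_one a).mul_right _).subtype _).hasSum
      fun g => ?_
    rw [norm_mul]
    exact mul_le_mul_of_nonneg_left
      (φ.le_opNorm_of_le ((lp.norm_apply_le_norm ENNReal.top_ne_zero f g).trans hC))
      (norm_nonneg _)
  · intro g hg hgF
    exact hg (by simp [hf g hgF])

lemma Dense.exists_mem_apply_ne_zero {V : Set (X →L[ℝ] ℝ)}
    (hV : @Dense (X →L[ℝ] ℝ)
      (⨅ x : X, TopologicalSpace.induced (fun φ : X →L[ℝ] ℝ => φ x) inferInstance) V)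
    {v : X} (hv : v ≠ 0) : ∃ φ ∈ V, φ v ≠ 0 := by
  let := ⨅ x : X, TopologicalSpace.induced (fun φ : X →L[ℝ] ℝ => φ x) inferInstance
  have heval : Continuous fun φ : X →L[ℝ] ℝ => φ v :=
    continuous_iff_le_induced.mpr (iInf_le _ v)
  obtain ⟨ψ, hψ⟩ := SeparatingDual.exists_ne_zero (R := ℝ) hv
  exact hV.exists_mem_open (isOpen_compl_singleton.preimage heval) ⟨ψ, hψ⟩

variable (V : Submodule ℝ (X →L[ℝ] ℝ))

lemma continuous_ultraweak_tsum_mul_apply (φ : V) (a : lp (fun _ : G => ℝ) 1) :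
    Continuous[ultraweak G X V, _]
      fun f : lp (fun _ : G => X) ∞ => ∑' g, a g * (φ : X →L[ℝ] ℝ) (f g) :=
  continuous_iff_le_induced.mpr (iInf_le_of_le φ (iInf_le _ a))

lemma t2Space_ultraweak
    (hV : @Dense (X →L[ℝ] ℝ)
      (⨅ x : X, TopologicalSpace.induced (fun φ : X →L[ℝ] ℝ => φ x) inferInstance)
      (V : Set (X →L[ℝ] ℝ))) :
    @T2Space (lp (fun _ : G => X) ∞) (ultraweak G X V) := by
  classical
  let := ultraweak G X V
  refine ⟨fun f f' hff => ?_⟩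
  obtain ⟨g, hg⟩ : ∃ g, f g ≠ f' g := by
    by_contra! h
    exact hff (lp.ext (funext h))
  obtain ⟨φ, hφV, hφ⟩ := hV.exists_mem_apply_ne_zero (sub_ne_zero.mpr hg)
  let δ : lp (fun _ : G => ℝ) 1 := lp.single 1 g 1
  have hpoint (u : lp (fun _ : G => X) ∞) : ∑' g', δ g' * φ (u g') = φ (u g) := by
    rw [tsum_eq_single g fun g' hg' => by rw [lp.single_apply_ne 1 g _ hg', zero_mul],
      lp.single_apply_self, one_mul]
  refine separated_by_continuous
    (continuous_ultraweak_tsum_mul_apply V ⟨φ, hφV⟩ δ) ?_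
  simpa [hpoint, sub_eq_zero] using hφ

lemma tendsto_ultraweak_of_eqOn {x : lp (fun _ : G => X) ∞}
    {xs : Finset G → lp (fun _ : G => X) ∞} {C : ℝ} (hC : ∀ F, ‖xs F - x‖ ≤ C)
    (heq : ∀ F, ∀ g ∈ F, xs F g = x g) :
    Tendsto xs atTop (@nhds _ (ultraweak G X V) x) := by
  unfold ultraweak
  simp only [nhds_iInf, nhds_induced, tendsto_iInf, tendsto_comap_iff]
  rintro ⟨φ, -⟩ a
  let pair (f : lp (fun _ : G => X) ∞) : ℝ := ∑' g, a g * φ (f g)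
  have hsub (F : Finset G) : pair (xs F) - pair x = pair (xs F - x) := by
    rw [← (summable_mul_apply a φ (xs F)).tsum_sub (summable_mul_apply a φ x)]
    simp [pair, mul_sub]
  have hlim : Tendsto (fun F => pair (xs F) - pair x) atTop (𝓝 0) := by
    refine squeeze_zero_norm (fun F => ?_)
      (tendsto_tsum_compl_atTop_zero fun g => ‖a g‖ * (‖φ‖ * C))
    rw [hsub]
    exact norm_tsum_mul_apply_le a φ (fun g hg => by simp [heq F g hg]) (hC F)
  simpa [Function.comp_def] using hlim.add_const (pair x)

end Ultraweak

section Diagonal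

variable {G : Type*} [Group G] {X : Type*} [NormedAddCommGroup X] [NormedSpace ℝ X]
  {V : Submodule ℝ (X →L[ℝ] ℝ)} {K : Set (lp (fun _ : G => X) ∞)}

lemma LinfConvex.linfDiag_mem (hK : LinfConvex K) (hcl : IsClosed[ultraweak G X V] K) {C : ℝ}
    (hC : ∀ f ∈ K, ‖f‖ ≤ C) {y : G → lp (fun _ : G => X) ∞} (hy : ∀ g, y g ∈ K) :
    linfDiag y C (fun g => hC _ (hy g)) ∈ K := by
  have hyC (g : G) : ‖y g‖ ≤ C := hC _ (hy g)
  let xs (F : Finset G) : lp (fun _ : G => X) ∞ := linfPiecewise (↑F) (linfDiag y C hyC) (y 1)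
  have hxs (F : Finset G) : xs F ∈ K := by
    classical
    induction F using Finset.induction_on with
    | empty => simpa [xs] using hy 1
    | insert k F _ ih =>
      simpa only [xs, Finset.coe_insert, linfPiecewise_insert_linfDiag] using
        hK.linfPiecewise_mem {k} (hy k) ih
  have hdiag : ‖linfDiag y C hyC‖ ≤ C :=
    lp.norm_le_of_forall_le ((norm_nonneg _).trans (hyC 1))
      fun g => (lp.norm_apply_le_norm ENNReal.top_ne_zero (y g) g).trans (hyC g)
  let := ultraweak G X V
  exact hcl.mem_of_tendsto (tendsto_ultraweak_of_eqOn V (C := C + C)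
    (fun F => (norm_sub_le _ _).trans (add_le_add (hC _ (hxs F)) hdiag))
    (fun F g hg => linfPiecewise_apply_of_mem hg)) (Eventually.of_forall hxs)

end Diagonal

end

theorem fixed_point_of_G_affine_action_general
    {G : Type*} [Group G]
    {X : Type*} [NormedAddCommGroup X] [NormedSpace ℝ X]
    (V : Submodule ℝ (X →L[ℝ] ℝ))
    (hV : @Dense (X →L[ℝ] ℝ)
      (⨅ x : X, TopologicalSpace.induced (fun φ : X →L[ℝ] ℝ => φ x) inferInstance)
      (V : Set (X →L[ℝ] ℝ)))
    (K : Set (lp (fun _ : G => X) ∞))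
    (hne : K.Nonempty)
    (hbdd : ∃ C : ℝ, ∀ f ∈ K, ‖f‖ ≤ C)
    (hconv : LinfConvex K)
    (hcpt : @IsCompact _ (ultraweak G X V) K)
    (α : G → K → K) (hα : IsGAffineAction K α) :
    ∃ x₀ : K, ∀ g : G, α g x₀ = x₀ := by
  obtain ⟨C, hC⟩ := hbdd
  obtain ⟨b, hb⟩ := hne
  let orbit (h : G) : K := α h ⟨b, hb⟩
  have hcl : IsClosed[ultraweak G X V] K :=
    @IsCompact.isClosed _ (ultraweak G X V) (t2Space_ultraweak V hV) _ hcpt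
  let x₀ : K := ⟨_, hconv.linfDiag_mem hcl hC fun h => (orbit h).2⟩
  refine ⟨x₀, fun g => Subtype.ext (lp.ext (funext fun h => ?_))⟩
  have hglue := hα.coe_apply_linfPiecewise g {g⁻¹ * h} (x := orbit (g⁻¹ * h)) (y := x₀)
    (z := x₀) (linfPiecewise_singleton_linfDiag _ C (fun h => hC _ (orbit h).2) (g⁻¹ * h)).symm
  have hmem : h ∈ g • ({g⁻¹ * h} : Set G) := by simp
  have horbit : α g (orbit (g⁻¹ * h)) = orbit h := by
    simp only [orbit, ← hα.2.1, mul_inv_cancel_left]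
  rw [hglue, linfPiecewise_apply_of_mem hmem, horbit]
  rfl

/-- **A fixed point theorem for actions on `ℓ∞(G, X)`.**  Let `G` be a finitely generated
group, `X` a real Banach space, and `V ⊆ X*` a weak-* dense subspace.  Let
`K ⊆ ℓ∞(G, X)` be a nonempty, bounded, `ℓ∞(G)`-convex subset which is compact in the
ultra-weak topology induced by `V`, and let `α` be a `G`-affine action of `G` on `K`
such that each `α_g` is ultra-weakly continuous.  Then `α` has a fixed point in `K`. -/
theorem fixed_point_of_G_affine_action
    {G : Type*} [Group G] [Group.FG G]
    {X : Type*} [NormedAddCommGroup X] [NormedSpace ℝ X] [CompleteSpace X]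
    (V : Submodule ℝ (X →L[ℝ] ℝ))
    (hV : @Dense (X →L[ℝ] ℝ)
      (⨅ x : X, TopologicalSpace.induced (fun φ : X →L[ℝ] ℝ => φ x) inferInstance)
      (V : Set (X →L[ℝ] ℝ)))
    (K : Set (lp (fun _ : G => X) ∞))
    (hne : K.Nonempty)
    (hbdd : ∃ C : ℝ, ∀ f ∈ K, ‖f‖ ≤ C)
    (hconv : LinfConvex K)
    (hcpt : @IsCompact _ (ultraweak G X V) K)
    (α : G → K → K) (hα : IsGAffineAction K α)
    (hcont : ∀ g : G,
      @Continuous _ _ (TopologicalSpace.induced Subtype.val (ultraweak G X V))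
        (TopologicalSpace.induced Subtype.val (ultraweak G X V)) (α g)) :
    ∃ x₀ : K, ∀ g : G, α g x₀ = x₀ :=
  fixed_point_of_G_affine_action_general V hV K hne hbdd hconv hcpt α hα
end
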